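/- Rényi-2 entangling rate bound: let ρ_{AB} be a density matrix on H_A ⊗ H_B and V = ∑_{i,j} c_{ij} A_i ⊗ B_j with Hermitian A_i, B_j of operator norm 1. Define Γ = 2i · tr(ρ_A · tr_B([V, ρ_{AB}])) / tr(ρ_A²), where ρ_A = tr_B ρ_{AB}. Then |Γ| ≤ 4 ∑_{i,j} |c_{ij}|. -/

import Mathlib

open Matrix
open scoped ComplexOrder Kronecker

/-- Partial trace over the second tensor factor. -/
noncomputable def ptraceB {a b : ℕ} (M : Matrix (Fin a × Fin b) (Fin a × Fin b) ℂ) :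
    Matrix (Fin a) (Fin a) ℂ :=
  fun i k => ∑ j, M (i, j) (k, j)

/-!
Write `P = tr_B ρ`. Cyclicity of the trace turns the numerator into
`∑ c_ij tr (([P, A_i] ⊗ B_j) ρ) = ∑ c_ij tr ([P, A_i] σ_j)` with `σ_j = tr_B ((1 ⊗ B_j) ρ)`,
and the denominator is `‖P‖²` in the Frobenius norm. By Cauchy–Schwarz for the trace pairing it
suffices that `‖[P, A_i]‖ ≤ 2 ‖P‖`, which holds because `A_i` is a contraction, and that
`‖σ_j‖ ≤ ‖P‖`. For the latter write `ρ = Sᴴ S`: regrouping the entries of `S` into a matrix `T`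
exhibits `σ_j` and `P` as the transposes of `T W Tᴴ` and `T Tᴴ`, where `W = 1 ⊗ B_j` is again a
Hermitian contraction.
-/

attribute [local instance] Matrix.frobeniusNormedAddCommGroup

namespace Matrix

variable {α : Type*} {l m n p : Type*}

theorem sub_kronecker [NonUnitalNonAssocRing α] (A B : Matrix l m α) (C : Matrix n p α) :
    (A - B) ⊗ₖ C = A ⊗ₖ C - B ⊗ₖ C := by
  ext; simp [sub_mul]

theorem kronecker_sub [NonUnitalNonAssocRing α] (A : Matrix l m α) (B C : Matrix n p α) :
    A ⊗ₖ (B - C) = A ⊗ₖ B - A ⊗ₖ C := by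
  ext; simp [mul_sub]

theorem kronecker_one_mul_sub_mul_kronecker_one [CommRing α] [Fintype m] [Fintype n]
    [DecidableEq n] (Y A : Matrix m m α) (B : Matrix n n α) :
    (Y ⊗ₖ 1) * (A ⊗ₖ B) - (A ⊗ₖ B) * (Y ⊗ₖ 1) = (Y * A - A * Y) ⊗ₖ B := by
  rw [← mul_kronecker_mul, ← mul_kronecker_mul, Matrix.one_mul, Matrix.mul_one, sub_kronecker]

variable {𝕜 : Type*} [RCLike 𝕜] [Fintype m] [Fintype n]

open scoped MatrixOrder in
theorem IsHermitian.posSemidef_one_sub_mul_self [DecidableEq n] {A : Matrix n n 𝕜}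
    (hA : A.IsHermitian) (h : ⨆ i, |hA.eigenvalues i| ≤ 1) : (1 - A * A).PosSemidef := by
  have hcfc : 1 - A * A = cfc (fun t : ℝ => 1 - t * t) A := by
    rw [cfc_sub _ _ A, cfc_const_one .., cfc_mul _ _ A, cfc_id' ..]
  rw [← nonneg_iff_posSemidef, hcfc]
  refine cfc_nonneg fun t ht => ?_
  rw [hA.spectrum_real_eq_range_eigenvalues] at ht
  obtain ⟨i, rfl⟩ := ht
  have := abs_le.mp ((le_ciSup (Set.finite_range _).bddAbove i).trans h)
  nlinarith

/-- Mathlib's Frobenius norm of `M` is the norm of `toLp 2 fun i => toLp 2 (M i)`. -/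
theorem trace_conjTranspose_mul_eq_inner (M N : Matrix m n 𝕜) :
    (Mᴴ * N).trace =
      inner 𝕜 (WithLp.toLp 2 fun i => WithLp.toLp 2 (M i))
        (WithLp.toLp 2 fun i => WithLp.toLp 2 (N i)) := by
  simp only [trace, diag_apply, mul_apply, conjTranspose_apply, PiLp.inner_apply,
    RCLike.inner_apply]
  rw [Finset.sum_comm]
  simp [mul_comm]

theorem norm_trace_mul_le (M : Matrix m n 𝕜) (N : Matrix n m 𝕜) :
    ‖(M * N).trace‖ ≤ ‖M‖ * ‖N‖ :=
  calc ‖(M * N).trace‖ = ‖(Mᴴᴴ * N).trace‖ := by rw [conjTranspose_conjTranspose]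
    _ ≤ ‖Mᴴ‖ * ‖N‖ := by
      rw [trace_conjTranspose_mul_eq_inner]
      exact norm_inner_le_norm _ _
    _ = ‖M‖ * ‖N‖ := by rw [frobenius_norm_conjTranspose]

theorem frobenius_norm_sq_eq_trace_conjTranspose_mul_self (M : Matrix m n 𝕜) :
    ((‖M‖ ^ 2 : ℝ) : 𝕜) = (Mᴴ * M).trace := by
  rw [trace_conjTranspose_mul_eq_inner, inner_self_eq_norm_sq_to_K]
  push_cast
  rfl

theorem frobenius_norm_sq_eq_trace_mul_conjTranspose_self (M : Matrix m n 𝕜) :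
    ((‖M‖ ^ 2 : ℝ) : 𝕜) = (M * Mᴴ).trace := by
  rw [← frobenius_norm_conjTranspose, frobenius_norm_sq_eq_trace_conjTranspose_mul_self,
    conjTranspose_conjTranspose]

open scoped MatrixOrder in
/-- Writing `1 - A * Aᴴ = Cᴴ * C` splits `‖M‖ ^ 2` as `‖M * A‖ ^ 2 + ‖M * Cᴴ‖ ^ 2`. -/
theorem frobenius_norm_mul_le_of_posSemidef_one_sub [DecidableEq n] (M : Matrix m n 𝕜)
    {A : Matrix n n 𝕜} (hA : (1 - A * Aᴴ).PosSemidef) : ‖M * A‖ ≤ ‖M‖ := by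
  obtain ⟨C, hC⟩ := CStarAlgebra.nonneg_iff_eq_star_mul_self.mp hA.nonneg
  have hAC : A * Aᴴ + Cᴴ * C = 1 := by
    rw [← star_eq_conjTranspose C, ← hC]
    abel
  have hsplit : ‖M * A‖ ^ 2 + ‖M * Cᴴ‖ ^ 2 = ‖M‖ ^ 2 := by
    apply RCLike.ofReal_injective (K := 𝕜)
    push_cast
    simp only [← RCLike.ofReal_pow, frobenius_norm_sq_eq_trace_mul_conjTranspose_self,
      conjTranspose_mul, conjTranspose_conjTranspose, ← trace_add]
    calc (M * A * (Aᴴ * Mᴴ) + M * Cᴴ * (C * Mᴴ)).trace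
        = (M * (A * Aᴴ + Cᴴ * C) * Mᴴ).trace := by
          simp only [Matrix.mul_add, Matrix.add_mul, Matrix.mul_assoc]
      _ = (M * Mᴴ).trace := by rw [hAC, Matrix.mul_one]
  nlinarith [norm_nonneg (M * A), norm_nonneg M, sq_nonneg ‖M * Cᴴ‖]

theorem frobenius_norm_mul_le_of_posSemidef_one_sub_left [DecidableEq m] {A : Matrix m m 𝕜}
    (M : Matrix m n 𝕜) (hA : (1 - Aᴴ * A).PosSemidef) : ‖A * M‖ ≤ ‖M‖ := by
  rw [← frobenius_norm_conjTranspose, conjTranspose_mul, ← frobenius_norm_conjTranspose M]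
  exact frobenius_norm_mul_le_of_posSemidef_one_sub Mᴴ (by rwa [conjTranspose_conjTranspose])

theorem frobenius_norm_conjTranspose_mul_self (T : Matrix m n 𝕜) : ‖Tᴴ * T‖ = ‖T * Tᴴ‖ := by
  refine (pow_left_inj₀ (norm_nonneg _) (norm_nonneg _) two_ne_zero).mp ?_
  apply RCLike.ofReal_injective (K := 𝕜)
  rw [frobenius_norm_sq_eq_trace_conjTranspose_mul_self,
    frobenius_norm_sq_eq_trace_conjTranspose_mul_self, conjTranspose_mul, conjTranspose_mul,
    conjTranspose_conjTranspose, Matrix.mul_assoc, trace_mul_comm]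
  simp only [Matrix.mul_assoc]

/-- With `G = Tᴴ * T`, `‖T * W * Tᴴ‖ ^ 2 = tr (G * (W * G * W))`, and `W` contracts `G`
on both sides. -/
theorem frobenius_norm_mul_mul_conjTranspose_le [DecidableEq n] (T : Matrix m n 𝕜)
    {W : Matrix n n 𝕜} (hW : W.IsHermitian) (hW1 : (1 - W * W).PosSemidef) :
    ‖T * W * Tᴴ‖ ≤ ‖T * Tᴴ‖ := by
  set G := Tᴴ * T with hG
  have hGW : ‖W * G * W‖ ≤ ‖G‖ := by
    have hr : (1 - W * Wᴴ).PosSemidef := by rwa [hW.eq]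
    have hl : (1 - Wᴴ * W).PosSemidef := by rwa [hW.eq]
    exact (frobenius_norm_mul_le_of_posSemidef_one_sub _ hr).trans
      (frobenius_norm_mul_le_of_posSemidef_one_sub_left _ hl)
  have htrace : ((‖T * W * Tᴴ‖ ^ 2 : ℝ) : 𝕜) = (G * (W * G * W)).trace := by
    rw [frobenius_norm_sq_eq_trace_conjTranspose_mul_self, hG]
    simp only [conjTranspose_mul, conjTranspose_conjTranspose, hW.eq, Matrix.mul_assoc]
    rw [trace_mul_comm T, Matrix.mul_assoc, trace_mul_comm W]
    simp only [Matrix.mul_assoc]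
  have hsq : ‖T * W * Tᴴ‖ ^ 2 ≤ ‖G‖ ^ 2 := by
    rw [sq ‖G‖, ← abs_of_nonneg (sq_nonneg ‖T * W * Tᴴ‖), ← RCLike.norm_ofReal (K := 𝕜),
      htrace]
    exact (norm_trace_mul_le _ _).trans (mul_le_mul_of_nonneg_left hGW (norm_nonneg _))
  rw [← frobenius_norm_conjTranspose_mul_self]
  exact (pow_le_pow_iff_left₀ (norm_nonneg _) (norm_nonneg _) two_ne_zero).mp hsq

theorem frobenius_norm_commutator_le [DecidableEq n] (P : Matrix n n 𝕜) {A : Matrix n n 𝕜}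
    (hA : A.IsHermitian) (hA1 : (1 - A * A).PosSemidef) : ‖P * A - A * P‖ ≤ 2 * ‖P‖ := by
  have hr : (1 - A * Aᴴ).PosSemidef := by rwa [hA.eq]
  have hl : (1 - Aᴴ * A).PosSemidef := by rwa [hA.eq]
  calc ‖P * A - A * P‖ ≤ ‖P * A‖ + ‖A * P‖ := norm_sub_le _ _
    _ ≤ ‖P‖ + ‖P‖ := add_le_add (frobenius_norm_mul_le_of_posSemidef_one_sub P hr)
        (frobenius_norm_mul_le_of_posSemidef_one_sub_left P hl)
    _ = 2 * ‖P‖ := (two_mul _).symm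

end Matrix

section PartialTrace

variable {a b : ℕ}

theorem ptraceB_conjTranspose (M : Matrix (Fin a × Fin b) (Fin a × Fin b) ℂ) :
    (ptraceB M)ᴴ = ptraceB Mᴴ := by
  ext i k
  simp [ptraceB, conjTranspose_apply, star_sum]

theorem trace_mul_ptraceB (Y : Matrix (Fin a) (Fin a) ℂ)
    (M : Matrix (Fin a × Fin b) (Fin a × Fin b) ℂ) :
    (Y * ptraceB M).trace = ((Y ⊗ₖ (1 : Matrix (Fin b) (Fin b) ℂ)) * M).trace := by
  simp only [trace, diag_apply, mul_apply, ptraceB, kroneckerMap_apply, one_apply,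
    Fintype.sum_prod_type, mul_ite, mul_one, mul_zero, ite_mul, zero_mul,
    Finset.sum_ite_eq, Finset.mem_univ, if_true, Finset.mul_sum]
  exact Finset.sum_congr rfl fun _ _ => Finset.sum_comm

theorem trace_mul_ptraceB_commutator_of_eq_sum {p q : ℕ} (Y : Matrix (Fin a) (Fin a) ℂ)
    (ρ : Matrix (Fin a × Fin b) (Fin a × Fin b) ℂ) (A : Fin p → Matrix (Fin a) (Fin a) ℂ)
    (B : Fin q → Matrix (Fin b) (Fin b) ℂ) (c : Fin p → Fin q → ℂ)
    {V : Matrix (Fin a × Fin b) (Fin a × Fin b) ℂ} (hV : V = ∑ i, ∑ j, c i j • (A i ⊗ₖ B j)) :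
    (Y * ptraceB (V * ρ - ρ * V)).trace =
      ∑ i, ∑ j, c i j * (((Y * A i - A i * Y) ⊗ₖ B j) * ρ).trace := by
  have hcomm : (Y ⊗ₖ 1) * V - V * (Y ⊗ₖ 1) =
      ∑ i, ∑ j, c i j • ((Y * A i - A i * Y) ⊗ₖ B j) := by
    simp only [hV, Finset.mul_sum, Finset.sum_mul, ← Finset.sum_sub_distrib, Matrix.mul_smul,
      Matrix.smul_mul, ← smul_sub, kronecker_one_mul_sub_mul_kronecker_one]
  rw [trace_mul_ptraceB, Matrix.mul_sub, ← Matrix.mul_assoc, ← Matrix.mul_assoc, trace_sub,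
    trace_mul_cycle _ ρ V, ← trace_sub, ← Matrix.sub_mul, hcomm]
  simp only [Finset.sum_mul, trace_sum, Matrix.smul_mul, trace_smul, smul_eq_mul]

def reshapeB {ι : Type*} (S : Matrix ι (Fin a × Fin b) ℂ) : Matrix (Fin a) (ι × Fin b) ℂ :=
  of fun i mj => S mj.1 (i, mj.2)

theorem ptraceB_one_kronecker_mul_conjTranspose_mul_self {ι : Type*} [Fintype ι]
    [DecidableEq ι] (S : Matrix ι (Fin a × Fin b) ℂ) (B : Matrix (Fin b) (Fin b) ℂ) :
    ptraceB (((1 : Matrix (Fin a) (Fin a) ℂ) ⊗ₖ B) * (Sᴴ * S)) =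
      (reshapeB S * ((1 : Matrix ι ι ℂ) ⊗ₖ B) * (reshapeB S)ᴴ)ᵀ := by
  ext i i'
  simp only [ptraceB, transpose_apply, mul_apply, conjTranspose_apply, reshapeB, of_apply,
    kroneckerMap_apply, one_apply, Fintype.sum_prod_type, ite_mul, one_mul, zero_mul, mul_ite,
    mul_zero, Finset.sum_ite_irrel, Finset.sum_const_zero, Finset.sum_ite_eq,
    Finset.sum_ite_eq', Finset.mem_univ, if_true, Finset.mul_sum, Finset.sum_mul]
  conv_lhs => rw [Finset.sum_comm]
  conv_rhs => rw [Finset.sum_comm]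
  refine Finset.sum_congr rfl fun _ _ => ?_
  rw [Finset.sum_comm]
  refine Finset.sum_congr rfl fun _ _ => Finset.sum_congr rfl fun _ _ => ?_
  ring

open scoped MatrixOrder in
theorem frobenius_norm_ptraceB_one_kronecker_mul_le
    {ρ : Matrix (Fin a × Fin b) (Fin a × Fin b) ℂ} (hρ : ρ.PosSemidef)
    {B : Matrix (Fin b) (Fin b) ℂ} (hB : B.IsHermitian) (hB1 : (1 - B * B).PosSemidef) :
    ‖ptraceB (((1 : Matrix (Fin a) (Fin a) ℂ) ⊗ₖ B) * ρ)‖ ≤ ‖ptraceB ρ‖ := by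
  obtain ⟨S, rfl⟩ := CStarAlgebra.nonneg_iff_eq_star_mul_self.mp hρ.nonneg
  have hρ_eq := ptraceB_one_kronecker_mul_conjTranspose_mul_self S 1
  rw [one_kronecker_one, one_kronecker_one, Matrix.one_mul, Matrix.mul_one] at hρ_eq
  rw [star_eq_conjTranspose, ptraceB_one_kronecker_mul_conjTranspose_mul_self, hρ_eq,
    frobenius_norm_transpose, frobenius_norm_transpose]
  refine frobenius_norm_mul_mul_conjTranspose_le _ ?_ ?_
  · rw [IsHermitian, conjTranspose_kronecker, conjTranspose_one, hB.eq]
  · rw [← mul_kronecker_mul, Matrix.one_mul, ← one_kronecker_one, ← kronecker_sub]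
    exact PosSemidef.one.kronecker hB1

theorem norm_trace_kronecker_mul_le (X : Matrix (Fin a) (Fin a) ℂ)
    {ρ : Matrix (Fin a × Fin b) (Fin a × Fin b) ℂ} (hρ : ρ.PosSemidef)
    {B : Matrix (Fin b) (Fin b) ℂ} (hB : B.IsHermitian) (hB1 : (1 - B * B).PosSemidef) :
    ‖((X ⊗ₖ B) * ρ).trace‖ ≤ ‖X‖ * ‖ptraceB ρ‖ := by
  have hsplit : (X ⊗ₖ B) * ρ =
      (X ⊗ₖ (1 : Matrix (Fin b) (Fin b) ℂ)) * (((1 : Matrix (Fin a) (Fin a) ℂ) ⊗ₖ B) * ρ) := by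
    rw [← Matrix.mul_assoc, ← mul_kronecker_mul, Matrix.mul_one, Matrix.one_mul]
  rw [hsplit, ← trace_mul_ptraceB]
  exact (norm_trace_mul_le _ _).trans
    (mul_le_mul_of_nonneg_left (frobenius_norm_ptraceB_one_kronecker_mul_le hρ hB hB1)
      (norm_nonneg _))

end PartialTrace

theorem renyi2_entangling_rate_bound_general {a b p q : ℕ}
    (ρ : Matrix (Fin a × Fin b) (Fin a × Fin b) ℂ)
    (hρ : ρ.PosSemidef)
    (A : Fin p → Matrix (Fin a) (Fin a) ℂ) (B : Fin q → Matrix (Fin b) (Fin b) ℂ)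
    (hA : ∀ i, (A i).IsHermitian) (hB : ∀ j, (B j).IsHermitian)
    (hAnorm : ∀ i, (⨆ x, |(hA i).eigenvalues x|) = 1)
    (hBnorm : ∀ j, (⨆ y, |(hB j).eigenvalues y|) = 1)
    (c : Fin p → Fin q → ℝ)
    (V : Matrix (Fin a × Fin b) (Fin a × Fin b) ℂ)
    (hV : V = ∑ i, ∑ j, (c i j : ℂ) • (A i ⊗ₖ B j)) :
    ‖2 * Complex.I * ((ptraceB ρ) * ptraceB (V * ρ - ρ * V)).trace /
        ((ptraceB ρ) * (ptraceB ρ)).trace‖ ≤ 4 * ∑ i, ∑ j, |c i j| := by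
  set P := ptraceB ρ
  have hterm : ∀ i j, ‖(((P * A i - A i * P) ⊗ₖ B j) * ρ).trace‖ ≤ 2 * ‖P‖ ^ 2 := fun i j =>
    calc _ ≤ ‖P * A i - A i * P‖ * ‖P‖ := norm_trace_kronecker_mul_le _ hρ (hB j)
          ((hB j).posSemidef_one_sub_mul_self (hBnorm j).le)
      _ ≤ 2 * ‖P‖ * ‖P‖ := by
          gcongr
          exact frobenius_norm_commutator_le P (hA i)
            ((hA i).posSemidef_one_sub_mul_self (hAnorm i).le)
      _ = 2 * ‖P‖ ^ 2 := by ring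
  have hnum : ‖(P * ptraceB (V * ρ - ρ * V)).trace‖ ≤ (∑ i, ∑ j, |c i j|) * (2 * ‖P‖ ^ 2) := by
    rw [trace_mul_ptraceB_commutator_of_eq_sum P ρ A B _ hV, Finset.sum_mul]
    refine (norm_sum_le _ _).trans (Finset.sum_le_sum fun i _ => ?_)
    rw [Finset.sum_mul]
    refine (norm_sum_le _ _).trans (Finset.sum_le_sum fun j _ => ?_)
    rw [norm_mul, Complex.norm_real, Real.norm_eq_abs]
    exact mul_le_mul_of_nonneg_left (hterm i j) (abs_nonneg _)
  have hden : (P * P).trace = ((‖P‖ ^ 2 : ℝ) : ℂ) := by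
    have hP : Pᴴ = P := by rw [ptraceB_conjTranspose, hρ.1.eq]
    nth_rewrite 1 [← hP]
    exact (frobenius_norm_sq_eq_trace_conjTranspose_mul_self P).symm
  rw [hden, norm_div, Complex.norm_real, Real.norm_of_nonneg (by positivity)]
  refine div_le_of_le_mul₀ (by positivity) (by positivity) ?_
  rw [norm_mul, norm_mul, Complex.norm_I, Complex.norm_two]
  linarith

/-- Rényi-2 entangling rate bound. For a density matrix ρ_{AB}
and V = ∑_{i,j} c_{ij} A_i ⊗ B_j with Hermitian A_i, B_j of operator norm 1
(largest absolute eigenvalue equal to 1), the rate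
Γ = 2i·tr(ρ_A tr_B([V,ρ_{AB}]))/tr(ρ_A²) satisfies |Γ| ≤ 4 ∑_{i,j} |c_{ij}|. -/
theorem renyi2_entangling_rate_bound {a b p q : ℕ}
    (ρ : Matrix (Fin a × Fin b) (Fin a × Fin b) ℂ)
    (hρ : ρ.PosSemidef) (hρtr : ρ.trace = 1)
    (A : Fin p → Matrix (Fin a) (Fin a) ℂ) (B : Fin q → Matrix (Fin b) (Fin b) ℂ)
    (hA : ∀ i, (A i).IsHermitian) (hB : ∀ j, (B j).IsHermitian)
    (hAnorm : ∀ i, (⨆ x, |(hA i).eigenvalues x|) = 1)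
    (hBnorm : ∀ j, (⨆ y, |(hB j).eigenvalues y|) = 1)
    (c : Fin p → Fin q → ℝ)
    (V : Matrix (Fin a × Fin b) (Fin a × Fin b) ℂ)
    (hV : V = ∑ i, ∑ j, (c i j : ℂ) • (A i ⊗ₖ B j)) :
    ‖2 * Complex.I * ((ptraceB ρ) * ptraceB (V * ρ - ρ * V)).trace /
        ((ptraceB ρ) * (ptraceB ρ)).trace‖ ≤ 4 * ∑ i, ∑ j, |c i j| :=
  renyi2_entangling_rate_bound_general ρ hρ A B hA hB hAnorm hBnorm c V hV
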